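/- (Strategic Perceptron mistake bound, full model.) Let d ∈ ℕ, E = EuclideanSpace ℝ (Fin d), α > 0, R ≥ 0, w* ∈ E. Let s : ℕ → ℝ with s t ∈ {1, −1}, z : ℕ → E with ‖z t‖ ≤ R and s t · ⟪z t, w*⟫ ≥ 1 for all t, and x : ℕ → E. Define w : ℕ → E, predicates pos and mistake, and surrogates x̃ by: w 0 = 0; pos t ↔ ⟪x t, w t⟫ ≥ α·‖w t‖; mistake t ↔ ((pos t ∧ s t = −1) ∨ (¬ pos t ∧ s t = 1)); x̃ t = x t − (α/‖w t‖) • (w t) if s t = −1 ∧ ⟪x t, w t⟫ = α·‖w t‖ ∧ w t ≠ 0, and x̃ t = x t otherwise; w (t+1) = w t + s t • (x̃ t) if mistake t, and w (t+1) = w t otherwise. Assume for every t that x t is a best response of the agent with true point z t and budget α to the classifier w t with threshold α, i.e. for all y ∈ E: ((1 if ⟪y, w t⟫ ≥ α·‖w t‖ else 0) − ‖y − z t‖/α) ≤ ((1 if ⟪x t, w t⟫ ≥ α·‖w t‖ else 0) − ‖x t − z t‖/α). Then for every T ∈ ℕ, the number of indices t < T with mistake t is at most (R + α)² · ‖w*‖².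 -/

import Mathlib

/-!
A best-responding agent moves only to turn a negative label into a positive one, and then
straight to the nearest point of the decision boundary, i.e. along `w` by at most `α`. So on a
false negative the agent stayed at `z`, and since the threshold equals the budget, `z` lies on
the negative side of `wᗮ`. On a false positive the surrogate is `z - c • w` with `c ≥ 0` and
`⟪x̃, w⟫ ≥ 0` (on the boundary it is the orthogonal projection of `z` onto `wᗮ`); it is then no
longer than `z`, and keeps margin `≤ -1` against `w*` as long as `⟪w, w*⟫ ≥ 0`. Hence every
update `s • x̃` satisfies the hypotheses of the classical perceptron argument: `⟪w T, w*⟫` grows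
by at least `1` per mistake while `‖w T‖²` grows by at most `(R + α)²`.
-/

open RealInnerProductSpace

section StrategicResponse

variable {E : Type*} [NormedAddCommGroup E] [InnerProductSpace ℝ E]

noncomputable def classifierLabel (τ : ℝ) (w y : E) : ℝ :=
  if τ * ‖w‖ ≤ ⟪y, w⟫ then 1 else 0

noncomputable def strategicUtility (α τ : ℝ) (w z y : E) : ℝ :=
  classifierLabel τ w y - ‖y - z‖ / α

def IsBestResponse (α τ : ℝ) (w z x : E) : Prop :=
  ∀ y, strategicUtility α τ w z y ≤ strategicUtility α τ w z x

noncomputable def boundaryProjection (τ : ℝ) (w z : E) : E :=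
  z + ((τ * ‖w‖ - ⟪z, w⟫) / ‖w‖ ^ 2) • w

lemma inner_boundaryProjection {w : E} (hw : w ≠ 0) (τ : ℝ) (z : E) :
    ⟪boundaryProjection τ w z, w⟫ = τ * ‖w‖ := by
  have : ‖w‖ ^ 2 ≠ 0 := by positivity
  rw [boundaryProjection, inner_add_left, real_inner_smul_left, real_inner_self_eq_norm_sq,
    div_mul_cancel₀ _ this]
  ring

lemma norm_boundaryProjection_sub {τ : ℝ} {w z : E} (hw : w ≠ 0) (hz : ⟪z, w⟫ ≤ τ * ‖w‖) :
    ‖boundaryProjection τ w z - z‖ = (τ * ‖w‖ - ⟪z, w⟫) / ‖w‖ := by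
  have : 0 < ‖w‖ := norm_pos_iff.2 hw
  rw [boundaryProjection, add_sub_cancel_left, norm_smul, Real.norm_eq_abs,
    abs_of_nonneg (div_nonneg (by linarith) (by positivity))]
  field_simp

namespace IsBestResponse

variable {α τ : ℝ} {w z x : E}

lemma norm_sub_div_le (h : IsBestResponse α τ w z x) :
    ‖x - z‖ / α ≤ classifierLabel τ w x - classifierLabel τ w z := by
  have := h z
  simp only [strategicUtility, sub_self, norm_zero, zero_div, sub_zero] at this
  linarith

lemma norm_sub_le (hα : 0 < α) (h : IsBestResponse α τ w z x) : ‖x - z‖ ≤ α := by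
  have := h.norm_sub_div_le
  rw [div_le_iff₀ hα] at this
  unfold classifierLabel at this
  split_ifs at this <;> linarith

lemma eq_of_label_le (hα : 0 < α) (h : IsBestResponse α τ w z x)
    (hle : classifierLabel τ w x ≤ classifierLabel τ w z) : x = z := by
  have := h.norm_sub_div_le
  rw [div_le_iff₀ hα] at this
  exact sub_eq_zero.1 (norm_le_zero_iff.1 (by nlinarith))

lemma eq_of_not_le (hα : 0 < α) (h : IsBestResponse α τ w z x) (hx : ¬ τ * ‖w‖ ≤ ⟪x, w⟫) :
    x = z :=
  h.eq_of_label_le hα (by unfold classifierLabel; split_ifs <;> norm_num)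

lemma eq_of_le (hα : 0 < α) (h : IsBestResponse α τ w z x) (hz : τ * ‖w‖ ≤ ⟪z, w⟫) :
    x = z :=
  h.eq_of_label_le hα (by unfold classifierLabel; split_ifs <;> norm_num)

lemma one_sub_div_le_strategicUtility (h : IsBestResponse α τ w z x) (hw : w ≠ 0)
    (hz : ⟪z, w⟫ ≤ τ * ‖w‖) :
    1 - (τ * ‖w‖ - ⟪z, w⟫) / ‖w‖ / α ≤ strategicUtility α τ w z x := by
  have := h (boundaryProjection τ w z)
  rwa [strategicUtility, classifierLabel, if_pos (inner_boundaryProjection hw τ z).ge,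
    norm_boundaryProjection_sub hw hz] at this

lemma eq_boundaryProjection (hα : 0 < α) (h : IsBestResponse α τ w z x)
    (hx : τ * ‖w‖ ≤ ⟪x, w⟫) (hz : ¬ τ * ‖w‖ ≤ ⟪z, w⟫) : x = boundaryProjection τ w z := by
  have hw : w ≠ 0 := by rintro rfl; simp at hz
  have hnw : 0 < ‖w‖ := norm_pos_iff.2 hw
  have hu := h.one_sub_div_le_strategicUtility hw (not_le.1 hz).le
  rw [strategicUtility, classifierLabel, if_pos hx, sub_le_sub_iff_left,
    div_le_div_iff_of_pos_right hα, le_div_iff₀ hnw] at hu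
  have hCS : ⟪x, w⟫ - ⟪z, w⟫ ≤ ‖x - z‖ * ‖w‖ := by
    rw [← inner_sub_left]
    exact real_inner_le_norm _ _
  have hdist : ‖x - z‖ * ‖w‖ = τ * ‖w‖ - ⟪z, w⟫ := by linarith
  -- the Cauchy–Schwarz inequality is tight, so `x - z` is a nonnegative multiple of `w`
  have hpar : (‖x - z‖ / ‖w‖) • w = x - z := by
    refine (inner_eq_norm_mul_iff_div hw).1 ?_
    rw [real_inner_comm (x - z) w, inner_sub_left]
    simp only [RCLike.ofReal_real_eq_id, id]
    linarith
  have hcoef : (τ * ‖w‖ - ⟪z, w⟫) / ‖w‖ ^ 2 = ‖x - z‖ / ‖w‖ := by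
    rw [← hdist]
    field_simp
  rw [boundaryProjection, hcoef, hpar]
  abel

lemma inner_le_of_not_le (hα : 0 < α) (h : IsBestResponse α τ w z x)
    (hx : ¬ τ * ‖w‖ ≤ ⟪x, w⟫) : ⟪z, w⟫ ≤ (τ - α) * ‖w‖ := by
  obtain rfl := h.eq_of_not_le hα hx
  have hw : w ≠ 0 := by rintro rfl; simp at hx
  have hu := h.one_sub_div_le_strategicUtility hw (not_le.1 hx).le
  rw [strategicUtility, classifierLabel, if_neg hx, sub_self, norm_zero, zero_div, sub_zero,
    sub_nonpos, div_div, one_le_div₀ (by positivity)] at hu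
  linarith

lemma exists_sub_eq_smul (hα : 0 < α) (h : IsBestResponse α τ w z x)
    (hx : τ * ‖w‖ ≤ ⟪x, w⟫) : ∃ a : ℝ, 0 ≤ a ∧ x - z = a • w := by
  by_cases hz : τ * ‖w‖ ≤ ⟪z, w⟫
  · exact ⟨0, le_rfl, by rw [h.eq_of_le hα hz, sub_self, zero_smul]⟩
  · refine ⟨(τ * ‖w‖ - ⟪z, w⟫) / ‖w‖ ^ 2, div_nonneg (by linarith) (by positivity), ?_⟩
    rw [h.eq_boundaryProjection hα hx hz, boundaryProjection, add_sub_cancel_left]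

end IsBestResponse

lemma norm_sub_smul_le {z w : E} {c : ℝ} (hc : 0 ≤ c) (h : 0 ≤ ⟪z - c • w, w⟫) :
    ‖z - c • w‖ ≤ ‖z‖ := by
  have hsq : ‖z - c • w‖ ^ 2 ≤ ‖z - c • w‖ * ‖z‖ :=
    calc ‖z - c • w‖ ^ 2 = ⟪z - c • w, z⟫ - c * ⟪z - c • w, w⟫ := by
          rw [← real_inner_self_eq_norm_sq, inner_sub_right, real_inner_smul_right]
      _ ≤ ⟪z - c • w, z⟫ := by nlinarith
      _ ≤ ‖z - c • w‖ * ‖z‖ := real_inner_le_norm _ _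
  nlinarith [norm_nonneg (z - c • w), norm_nonneg z]

noncomputable def surrogate [DecidableEq E] (α s : ℝ) (w x : E) : E :=
  if s = -1 ∧ ⟪x, w⟫ = α * ‖w‖ ∧ w ≠ 0 then x - (α / ‖w‖) • w else x

variable [DecidableEq E] {α : ℝ} {w z x : E}

lemma surrogate_of_false_positive (hα : 0 < α) (h : IsBestResponse α α w z x)
    (hx : α * ‖w‖ ≤ ⟪x, w⟫) :
    ∃ c : ℝ, 0 ≤ c ∧ surrogate α (-1) w x = z - c • w ∧ 0 ≤ ⟪surrogate α (-1) w x, w⟫ := by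
  by_cases hb : ⟪x, w⟫ = α * ‖w‖ ∧ w ≠ 0
  · obtain ⟨hxw, hw⟩ := hb
    have hnw : 0 < ‖w‖ := norm_pos_iff.2 hw
    obtain ⟨a, ha, hxz⟩ := h.exists_sub_eq_smul hα hx
    have haα : a * ‖w‖ ≤ α := by
      simpa [hxz, norm_smul, abs_of_nonneg ha] using h.norm_sub_le hα
    have hsurr : surrogate α (-1) w x = x - (α / ‖w‖) • w := if_pos ⟨rfl, hxw, hw⟩
    refine ⟨α / ‖w‖ - a, by rwa [sub_nonneg, le_div_iff₀ hnw], ?_, ?_⟩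
    · rw [hsurr, sub_smul, ← hxz]
      abel
    · rw [hsurr, inner_sub_left, real_inner_smul_left, real_inner_self_eq_norm_sq, hxw]
      field_simp
      simp
  · have hsurr : surrogate α (-1) w x = x := if_neg (by tauto)
    have hxz : x = z := by
      by_contra hne
      have hz : ¬ α * ‖w‖ ≤ ⟪z, w⟫ := fun hz => hne (h.eq_of_le hα hz)
      have hw : w ≠ 0 := by rintro rfl; simp at hz
      exact hb ⟨by rw [h.eq_boundaryProjection hα hx hz, inner_boundaryProjection hw], hw⟩
    refine ⟨0, le_rfl, by rw [hsurr, hxz, zero_smul, sub_zero], ?_⟩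
    rw [hsurr]
    exact (mul_nonneg hα.le (norm_nonneg w)).trans hx

lemma surrogate_of_false_negative (hα : 0 < α) (h : IsBestResponse α α w z x)
    (hx : ¬ α * ‖w‖ ≤ ⟪x, w⟫) : surrogate α 1 w x = z ∧ ⟪z, w⟫ ≤ 0 := by
  have hsurr : surrogate α 1 w x = x := if_neg (by norm_num)
  refine ⟨hsurr.trans (h.eq_of_not_le hα hx), ?_⟩
  simpa using h.inner_le_of_not_le hα hx

theorem smul_surrogate_of_mistake (hα : 0 < α) (h : IsBestResponse α α w z x)
    {s : ℝ} {wstar : E}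
    (hm : (α * ‖w‖ ≤ ⟪x, w⟫ ∧ s = -1) ∨ (¬ α * ‖w‖ ≤ ⟪x, w⟫ ∧ s = 1))
    (hz : 1 ≤ s * ⟪z, wstar⟫) (hw : 0 ≤ ⟪w, wstar⟫) :
    1 ≤ ⟪s • surrogate α s w x, wstar⟫ ∧ ⟪s • surrogate α s w x, w⟫ ≤ 0 ∧
      ‖s • surrogate α s w x‖ ≤ ‖z‖ := by
  rcases hm with ⟨hx, rfl⟩ | ⟨hx, rfl⟩
  · obtain ⟨c, hc, hsurr, hinner⟩ := surrogate_of_false_positive hα h hx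
    rw [hsurr] at hinner ⊢
    simp only [neg_one_smul, inner_neg_left, norm_neg]
    refine ⟨?_, by linarith, norm_sub_smul_le hc hinner⟩
    rw [inner_sub_left, real_inner_smul_left]
    nlinarith [mul_nonneg hc hw]
  · obtain ⟨hsurr, hinner⟩ := surrogate_of_false_negative hα h hx
    rw [one_smul, hsurr]
    exact ⟨by linarith, hinner, le_rfl⟩

end StrategicResponse

section Perceptron

variable {E : Type*} [NormedAddCommGroup E] [InnerProductSpace ℝ E]
  {w u : ℕ → E} {M : ℕ → Prop} [DecidablePred M] {wstar : E} {B : ℝ}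

theorem perceptron_potentials (hw0 : w 0 = 0)
    (hupd : ∀ t, w (t + 1) = if M t then w t + u t else w t)
    (hu : ∀ t, M t → 0 ≤ ⟪w t, wstar⟫ → 1 ≤ ⟪u t, wstar⟫ ∧ ⟪u t, w t⟫ ≤ 0 ∧ ‖u t‖ ≤ B)
    (T : ℕ) :
    (((Finset.range T).filter M).card : ℝ) ≤ ⟪w T, wstar⟫ ∧
      ‖w T‖ ^ 2 ≤ ((Finset.range T).filter M).card * B ^ 2 := by
  induction T with
  | zero => simp [hw0]
  | succ T ih =>
    rw [Finset.range_add_one, Finset.filter_insert, hupd]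
    by_cases hm : M T
    · obtain ⟨hmargin, hangle, hnorm⟩ := hu T hm ((Nat.cast_nonneg _).trans ih.1)
      have hnorm_sq : ‖u T‖ ^ 2 ≤ B ^ 2 := pow_le_pow_left₀ (norm_nonneg _) hnorm 2
      rw [if_pos hm, if_pos hm, Finset.card_insert_of_notMem (by simp), Nat.cast_succ,
        inner_add_left, norm_add_sq_real, real_inner_comm (u T) (w T)]
      constructor <;> linarith [ih.1, ih.2]
    · rw [if_neg hm, if_neg hm]
      exact ih

theorem perceptron_mistake_bound (hw0 : w 0 = 0)
    (hupd : ∀ t, w (t + 1) = if M t then w t + u t else w t)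
    (hu : ∀ t, M t → 0 ≤ ⟪w t, wstar⟫ → 1 ≤ ⟪u t, wstar⟫ ∧ ⟪u t, w t⟫ ≤ 0 ∧ ‖u t‖ ≤ B)
    (T : ℕ) : (((Finset.range T).filter M).card : ℝ) ≤ B ^ 2 * ‖wstar‖ ^ 2 := by
  obtain ⟨hinner, hnorm⟩ := perceptron_potentials hw0 hupd hu T
  set m : ℝ := (((Finset.range T).filter M).card : ℝ)
  have hm : 0 ≤ m := Nat.cast_nonneg _
  have hCS : m ≤ ‖w T‖ * ‖wstar‖ := hinner.trans (real_inner_le_norm _ _)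
  have hsq : m * m ≤ m * (B ^ 2 * ‖wstar‖ ^ 2) :=
    calc m * m ≤ ‖w T‖ ^ 2 * ‖wstar‖ ^ 2 := by nlinarith
      _ ≤ m * B ^ 2 * ‖wstar‖ ^ 2 := by gcongr
      _ = m * (B ^ 2 * ‖wstar‖ ^ 2) := by ring
  rcases hm.eq_or_lt with h0 | h0
  · rw [← h0]
    positivity
  · exact le_of_mul_le_mul_left hsq h0

end Perceptron

open scoped Classical in
theorem strategic_perceptron_full_mistake_bound_general
    (d : ℕ) (α : ℝ) (hα : 0 < α) (R : ℝ)
    (wstar : EuclideanSpace ℝ (Fin d))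
    (s : ℕ → ℝ)
    (z : ℕ → EuclideanSpace ℝ (Fin d))
    (hzR : ∀ t, ‖z t‖ ≤ R)
    (hzm : ∀ t, s t * ⟪z t, wstar⟫ ≥ 1)
    (x : ℕ → EuclideanSpace ℝ (Fin d))
    (w : ℕ → EuclideanSpace ℝ (Fin d))
    (pos mistake : ℕ → Prop)
    (xtilde : ℕ → EuclideanSpace ℝ (Fin d))
    (hw0 : w 0 = 0)
    (hpos : ∀ t, pos t ↔ ⟪x t, w t⟫ ≥ α * ‖w t‖)
    (hmis : ∀ t, mistake t ↔ ((pos t ∧ s t = -1) ∨ (¬ pos t ∧ s t = 1)))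
    (hxt : ∀ t, xtilde t =
      if s t = -1 ∧ ⟪x t, w t⟫ = α * ‖w t‖ ∧ w t ≠ 0 then
        x t - (α / ‖w t‖) • w t
      else x t)
    (hupd : ∀ t, w (t + 1) = if mistake t then w t + s t • xtilde t else w t)
    (hbr : ∀ t, ∀ y : EuclideanSpace ℝ (Fin d),
      ((if ⟪y, w t⟫ ≥ α * ‖w t‖ then (1 : ℝ) else 0) - ‖y - z t‖ / α) ≤
        ((if ⟪x t, w t⟫ ≥ α * ‖w t‖ then (1 : ℝ) else 0) - ‖x t - z t‖ / α)) :
    ∀ T : ℕ, (((Finset.range T).filter (fun t => mistake t)).card : ℝ) ≤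
      (R + α) ^ 2 * ‖wstar‖ ^ 2 := by
  refine perceptron_mistake_bound (u := fun t => s t • xtilde t) hw0 hupd fun t hm hw => ?_
  rw [hmis t, hpos t] at hm
  obtain ⟨hmargin, hangle, hnorm⟩ := smul_surrogate_of_mistake hα (hbr t) hm (hzm t) hw
  rw [show xtilde t = surrogate α (s t) (w t) (x t) from hxt t]
  exact ⟨hmargin, hangle, hnorm.trans (by linarith [hzR t])⟩

open scoped Classical in
theorem strategic_perceptron_full_mistake_bound
    (d : ℕ) (α : ℝ) (hα : 0 < α) (R : ℝ) (hR : 0 ≤ R)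
    (wstar : EuclideanSpace ℝ (Fin d))
    (s : ℕ → ℝ) (hs : ∀ t, s t = 1 ∨ s t = -1)
    (z : ℕ → EuclideanSpace ℝ (Fin d))
    (hzR : ∀ t, ‖z t‖ ≤ R)
    (hzm : ∀ t, s t * ⟪z t, wstar⟫ ≥ 1)
    (x : ℕ → EuclideanSpace ℝ (Fin d))
    (w : ℕ → EuclideanSpace ℝ (Fin d))
    (pos mistake : ℕ → Prop)
    (xtilde : ℕ → EuclideanSpace ℝ (Fin d))
    (hw0 : w 0 = 0)
    (hpos : ∀ t, pos t ↔ ⟪x t, w t⟫ ≥ α * ‖w t‖)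
    (hmis : ∀ t, mistake t ↔ ((pos t ∧ s t = -1) ∨ (¬ pos t ∧ s t = 1)))
    (hxt : ∀ t, xtilde t =
      if s t = -1 ∧ ⟪x t, w t⟫ = α * ‖w t‖ ∧ w t ≠ 0 then
        x t - (α / ‖w t‖) • w t
      else x t)
    (hupd : ∀ t, w (t + 1) = if mistake t then w t + s t • xtilde t else w t)
    (hbr : ∀ t, ∀ y : EuclideanSpace ℝ (Fin d),
      ((if ⟪y, w t⟫ ≥ α * ‖w t‖ then (1 : ℝ) else 0) - ‖y - z t‖ / α) ≤
        ((if ⟪x t, w t⟫ ≥ α * ‖w t‖ then (1 : ℝ) else 0) - ‖x t - z t‖ / α)) :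
    ∀ T : ℕ, (((Finset.range T).filter (fun t => mistake t)).card : ℝ) ≤
      (R + α) ^ 2 * ‖wstar‖ ^ 2 :=
  strategic_perceptron_full_mistake_bound_general d α hα R wstar s z hzR hzm x w pos mistake xtilde
    hw0 hpos hmis hxt hupd hbr
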